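/- Every finite recursion-free set of Horn clauses can be transformed into an equivalent body-disjoint recursion-free set by duplicating relation symbols and their defining clauses, such that any syntactic solution of the duplicated system yields a syntactic solution of the original system by taking, for each original relation symbol, the conjunction of the solutions of its copies. -/

import Mathlib

namespace Stmt12

/- Horn clauses over a constraint language.
`S` indexes the class of structures, `U s` is the universe of structure `s`,
`V` is the set of first-order variables, `Con` the constraints (interpreted
by `interp`), `Tm` the first-order terms (evaluated by `tval`), `R` the
uninterpreted relation symbols with arities `arity`, and `xvar p` the fixed
vector of argument variables of the relation symbol `p`. -/
variable {S V Con Tm R : Type} (U : S → Type)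
  (interp : Con → (s : S) → (V → U s) → Prop)
  (tval : Tm → (s : S) → (V → U s) → U s)
  (arity : R → ℕ) (xvar : (p : R) → Fin (arity p) → V)

/-- An application p(t₁,…,tₖ) of a relation symbol to terms. -/
structure HAtom (arity : R → ℕ) (Tm : Type) : Type where
  rel : R
  args : Fin (arity rel) → Tm

/-- A Horn clause C ∧ B₁ ∧ … ∧ Bₙ → H; `head = none` encodes head `false`. -/
structure Clause (Con : Type) (arity : R → ℕ) (Tm : Type) : Type where
  c : Con
  body : List (HAtom arity Tm)
  head : Option (HAtom arity Tm)

/-- Interpretation of the relation symbols in a structure s. -/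
def RelInterp (s : S) : Type _ := ∀ p : R, (Fin (arity p) → U s) → Prop

/-- A clause holds in structure s under relation interpretation ρ. -/
def ClauseHoldsSem (s : S) (ρ : RelInterp U arity s) (cl : Clause Con arity Tm) : Prop :=
  ∀ α : V → U s,
    interp cl.c s α →
    (∀ b ∈ cl.body, ρ b.rel fun i => tval (b.args i) s α) →
    (match cl.head with
      | none => False
      | some a => ρ a.rel fun i => tval (a.args i) s α)

/-- Semantic solvability: in every structure of the class there exist
relations making all clauses true. -/
def SemSolvable (HC : List (Clause Con arity Tm)) : Prop :=
  ∀ s : S, ∃ ρ : RelInterp U arity s, ∀ cl ∈ HC, ClauseHoldsSem U interp tval arity s ρ cl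

open Classical in
/-- The assignment obtained from α by overriding the argument variables
of the relation symbol of `a` with the values of the argument terms
(semantic substitution sol(p)[t̄]). -/
noncomputable def override (s : S) (α : V → U s) (a : HAtom arity Tm) : V → U s :=
  fun v => if h : ∃ i, xvar a.rel i = v then tval (a.args (Classical.choose h)) s α else α v

/-- Instantiation sol(p)[t̄] of a relation symbol assignment at an atom. -/
def instA (sol : R → Con) (s : S) (α : V → U s) (a : HAtom arity Tm) : Prop :=
  interp (sol a.rel) s (override U tval arity xvar s α a)

/-- The instantiation sol(h) of a clause h is universally valid. -/
def ClauseHoldsSyn (sol : R → Con) (cl : Clause Con arity Tm) : Prop :=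
  ∀ (s : S) (α : V → U s),
    interp cl.c s α →
    (∀ b ∈ cl.body, instA U interp tval arity xvar sol s α b) →
    (match cl.head with
      | none => False
      | some a => instA U interp tval arity xvar sol s α a)

/-- sol(p) is a constraint "in the n free variables x̄_p": its interpretation
depends only on the designated argument variables. -/
def GoodSol (sol : R → Con) : Prop :=
  ∀ p : R, ∀ (s : S) (α β : V → U s),
    (∀ i, α (xvar p i) = β (xvar p i)) → (interp (sol p) s α ↔ interp (sol p) s β)

/-- Syntactic solvability: there is an assignment of constraints to relation
symbols validating (the universal closure of) every instantiated clause in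
every structure. -/
def SynSolvable (HC : List (Clause Con arity Tm)) : Prop :=
  ∃ sol : R → Con, GoodSol U interp arity xvar sol ∧
    ∀ cl ∈ HC, ClauseHoldsSyn U interp tval arity xvar sol cl
/-- The dependence relation of HC: p →_HC q if some clause has head symbol p
and q occurring in its body. -/
def Dep (HC : List (Clause Con arity Tm)) (p q : R) : Prop :=
  ∃ cl ∈ HC, (∃ a, cl.head = some a ∧ a.rel = p) ∧ (∃ b ∈ cl.body, b.rel = q)

/-- HC is recursion-free: the dependence relation is acyclic. -/
def RecursionFree (HC : List (Clause Con arity Tm)) : Prop :=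
  ∀ p : R, ¬ Relation.TransGen (Dep arity HC) p p

/-- Derivability of a relation-symbol fact in structure s by unfolding the
clauses of HC; for recursion-free HC this captures exactly satisfiability
of the inlined definitions exp'(p(t̄)) in the expansion exp(HC). -/
inductive Deriv (HC : List (Clause Con arity Tm)) (s : S) :
    (p : R) → (Fin (arity p) → U s) → Prop where
  | step (cl : Clause Con arity Tm) (hcl : cl ∈ HC) (a : HAtom arity Tm)
      (hhead : cl.head = some a) (α : V → U s)
      (hc : interp cl.c s α)
      (hb : ∀ b ∈ cl.body, Deriv HC s b.rel fun i => tval (b.args i) s α) :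
      Deriv HC s a.rel fun i => tval (a.args i) s α

/-- Satisfiability of the expansion exp(HC): some structure and assignment
satisfy the inlined body of some clause with head false. -/
def ExpSat (HC : List (Clause Con arity Tm)) : Prop :=
  ∃ (s : S), ∃ cl ∈ HC, cl.head = none ∧
    ∃ α : V → U s, interp cl.c s α ∧
      ∀ b ∈ cl.body, Deriv U interp tval arity HC s b.rel fun i => tval (b.args i) s α
/-- HC is body-disjoint: each relation symbol occurs in the body of at most
one clause, and at most once per clause body. -/
def BodyDisjoint (HC : List (Clause Con arity Tm)) : Prop :=
  (∀ cl ∈ HC, cl.body.Pairwise fun a b => a.rel ≠ b.rel) ∧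
  (∀ cl₁ ∈ HC, ∀ cl₂ ∈ HC, ∀ b₁ ∈ cl₁.body, ∀ b₂ ∈ cl₂.body,
      b₁.rel = b₂.rel → cl₁ = cl₂)

variable {R' : Type}

/-- Rename the relation symbol of an atom along π (copies back to originals). -/
def mapAtom (π : R' → R) (a : HAtom (fun p' => arity (π p')) Tm) : HAtom arity Tm :=
  ⟨π a.rel, a.args⟩

/-- Rename all relation symbols of a clause along π. -/
def mapClause (π : R' → R) (cl : Clause Con (fun p' => arity (π p')) Tm) :
    Clause Con arity Tm :=
  ⟨cl.c, cl.body.map (mapAtom arity π), cl.head.map (mapAtom arity π)⟩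

/-!
A copy of a relation symbol is one of its occurrences in the unfolding tree of the clause set:
the symbol together with the path of (clause, body position) pairs leading to it. Every clause
is duplicated once for each copy of its head, its body atoms receiving the extended paths, so
distinct body occurrences become distinct symbols and every dependence step lengthens the
path. Recursion-freeness bounds the length of the paths by the number of head symbols, hence
each symbol has finitely many copies. A clause of the original system follows from its
copies: its body implies the body of each copy, and the conjunction over all copies of its
head is the interpretation of the head itself.
-/

theorem Relation.not_transGen_self_of_lt {α : Type*} {r : α → α → Prop} (f : α → ℕ)
    (hf : ∀ a b, r a b → f a < f b) (a : α) : ¬ Relation.TransGen r a a := fun h => by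
  have := Relation.TransGen.lift f hf a a h
  rw [Relation.transGen_eq_self (r := (· < · : ℕ → ℕ → Prop))] at this
  exact lt_irrefl _ this

theorem List.finite_setOf_length_le_of_forall_mem {α : Type*} {E : Set α} (hE : E.Finite)
    (n : ℕ) : {l : List α | l.length ≤ n ∧ ∀ a ∈ l, a ∈ E}.Finite := by
  have := hE.to_subtype
  refine ((List.finite_length_le E n).image (List.map Subtype.val)).subset ?_
  rintro l ⟨hlen, hmem⟩
  exact ⟨l.pmap Subtype.mk hmem, List.length_pmap.le.trans hlen,
    (List.map_pmap _).trans (List.pmap_eq_self.mpr fun _ _ => rfl)⟩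

theorem clauseHoldsSem_iff (s : S) (ρ : RelInterp U arity s) (cl : Clause Con arity Tm) :
    ClauseHoldsSem U interp tval arity s ρ cl ↔
      ∀ α : V → U s, interp cl.c s α → (∀ b ∈ cl.body, ρ b.rel fun i => tval (b.args i) s α) →
        ∃ a, cl.head = some a ∧ ρ a.rel fun i => tval (a.args i) s α := by
  rcases cl with ⟨c, body, _ | a⟩ <;> simp [ClauseHoldsSem]

theorem clauseHoldsSyn_iff (sol : R → Con) (cl : Clause Con arity Tm) :
    ClauseHoldsSyn U interp tval arity xvar sol cl ↔
      ∀ (s : S) (α : V → U s), interp cl.c s α →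
        (∀ b ∈ cl.body, instA U interp tval arity xvar sol s α b) →
        ∃ a, cl.head = some a ∧ instA U interp tval arity xvar sol s α a := by
  rcases cl with ⟨c, body, _ | a⟩ <;> simp [ClauseHoldsSyn]

theorem clauseHoldsSem_mapClause (π : R' → R) (s : S) (ρ : RelInterp U arity s)
    (cl : Clause Con (fun p' => arity (π p')) Tm) :
    ClauseHoldsSem U interp tval arity s ρ (mapClause arity π cl) ↔
      ClauseHoldsSem U interp tval (fun p' => arity (π p')) s (fun p' => ρ (π p')) cl := by
  rcases cl with ⟨c, body, _ | a⟩ <;> simp [ClauseHoldsSem, mapClause, mapAtom]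

theorem goodSol_of_forall_fiber {π : R' → R} {sol' : R' → Con}
    (hgood : GoodSol U interp (fun p' => arity (π p')) (fun p' => xvar (π p')) sol')
    {sol : R → Con}
    (hsol : ∀ (p : R) (s : S) (α : V → U s),
      interp (sol p) s α ↔ ∀ p' : R', π p' = p → interp (sol' p') s α) :
    GoodSol U interp arity xvar sol := by
  intro p s α β hαβ
  rw [hsol, hsol]
  refine forall_congr' fun p' => imp_congr_right fun hp' => hgood p' s α β ?_
  subst hp'
  exact hαβ

section Duplication

variable {arity}
variable (HC : List (Clause Con arity Tm))

/- The path `(cl, j) :: σ` of a copy of `p` names the occurrence of `p` at body position `j`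
in the copy of `cl` whose head has path `σ`; a headless clause only has the copy at `[]`. -/
def ValidPath : R → List (Clause Con arity Tm × ℕ) → Prop
  | _, [] => True
  | p, (cl, j) :: σ => (∃ h : j < cl.body.length, cl.body[j].rel = p) ∧ cl ∈ HC ∧
      (cl.head = none → σ = []) ∧ ∀ a, cl.head = some a → ValidPath a.rel σ

def ValidClausePath (cl : Clause Con arity Tm) (σ : List (Clause Con arity Tm × ℕ)) : Prop :=
  cl ∈ HC ∧ (cl.head = none → σ = []) ∧ ∀ a, cl.head = some a → ValidPath HC a.rel σ

@[ext]
structure Copy where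
  rel : R
  path : List (Clause Con arity Tm × ℕ)
  valid : ValidPath HC rel path

variable {HC}

theorem Copy.forall_rel_eq {p : R} {P : Copy HC → Prop} :
    (∀ x : Copy HC, x.rel = p → P x) ↔ ∀ σ (h : ValidPath HC p σ), P ⟨p, σ, h⟩ := by
  refine ⟨fun hP σ h => hP _ rfl, ?_⟩
  rintro hP ⟨q, σ, h⟩ rfl
  exact hP σ h

def copyAtom {cl : Clause Con arity Tm} {σ : List (Clause Con arity Tm × ℕ)}
    (hv : ValidClausePath HC cl σ) (j : Fin cl.body.length) :
    HAtom (fun x : Copy HC => arity x.rel) Tm :=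
  ⟨⟨cl.body[j].rel, (cl, j) :: σ, ⟨j.2, rfl⟩, hv⟩, cl.body[j].args⟩

def copyClause {cl : Clause Con arity Tm} {σ : List (Clause Con arity Tm × ℕ)}
    (hv : ValidClausePath HC cl σ) : Clause Con (fun x : Copy HC => arity x.rel) Tm :=
  ⟨cl.c, List.ofFn (copyAtom hv), cl.head.pmap (fun a ha => ⟨⟨a.rel, σ, ha⟩, a.args⟩) hv.2.2⟩

section CopyClause

variable {cl : Clause Con arity Tm} {σ : List (Clause Con arity Tm × ℕ)}
  (hv : ValidClausePath HC cl σ)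

theorem mem_copyClause_body {b' : HAtom (fun x : Copy HC => arity x.rel) Tm} :
    b' ∈ (copyClause hv).body ↔ ∃ j, copyAtom hv j = b' :=
  List.mem_ofFn

theorem copyClause_head_eq_some {a' : HAtom (fun x : Copy HC => arity x.rel) Tm} :
    (copyClause hv).head = some a' ↔
      ∃ a, ∃ h : ValidPath HC a.rel σ, cl.head = some a ∧ a' = ⟨⟨a.rel, σ, h⟩, a.args⟩ := by
  dsimp only [copyClause]
  exact Option.pmap_eq_some_iff

theorem copyClause_head_eq_none : (copyClause hv).head = none ↔ cl.head = none := by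
  dsimp only [copyClause]
  exact Option.pmap_eq_none_iff

theorem mapClause_copyClause : mapClause arity Copy.rel (copyClause hv) = cl := by
  simp [mapClause, copyClause, mapAtom, copyAtom, List.map_ofFn, Function.comp_def,
    Option.map_pmap]

end CopyClause

theorem fst_mem_and_snd_lt_of_validPath :
    ∀ {p : R} {σ : List (Clause Con arity Tm × ℕ)}, ValidPath HC p σ →
      ∀ e ∈ σ, e.1 ∈ HC ∧ e.2 < e.1.body.length
  | _, [], _, _, he => by cases he
  | _, (cl, j) :: σ, ⟨⟨hj, _⟩, hcl, hnone, hsome⟩, e, he => by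
    rcases List.mem_cons.mp he with rfl | he
    · exact ⟨hcl, hj⟩
    · rcases hh : cl.head with _ | a
      · simp [hnone hh] at he
      · exact fst_mem_and_snd_lt_of_validPath (hsome a hh) e he

/- Along a path the heads of the clauses are distinct ancestors of `p`, so each step uses up
one element of any set containing all ancestors. -/
theorem length_le_of_validPath (hrf : RecursionFree arity HC) :
    ∀ {p : R} {σ : List (Clause Con arity Tm × ℕ)} {T : Finset R}, ValidPath HC p σ →
      (∀ q, Relation.TransGen (Dep arity HC) q p → q ∈ T) → σ.length ≤ T.card + 1
  | _, [], _, _, _ => by simp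
  | p, (cl, j) :: σ, T, ⟨⟨hj, hp⟩, hcl, hnone, hsome⟩, hT => by
    classical
    rcases hh : cl.head with _ | a
    · simp [hnone hh]
    have hdep : Dep arity HC a.rel p := ⟨cl, hcl, ⟨a, hh, rfl⟩, cl.body[j], by simp, hp⟩
    have haT : a.rel ∈ T := hT _ (.single hdep)
    have hσ : σ.length ≤ (T.erase a.rel).card + 1 := by
      refine length_le_of_validPath hrf (hsome a hh) fun q hq => Finset.mem_erase.mpr ⟨?_, ?_⟩
      · rintro rfl
        exact hrf _ hq
      · exact hT q (hq.tail hdep)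
    rw [Finset.card_erase_of_mem haT] at hσ
    have := Finset.card_pos.mpr ⟨_, haT⟩
    simp only [List.length_cons]
    omega

theorem finite_setOf_dep : {q : R | ∃ r, Dep arity HC q r}.Finite := by
  refine (HC.filterMap fun cl => cl.head.map HAtom.rel).finite_toSet.subset ?_
  rintro q ⟨r, cl, hcl, ⟨a, hh, rfl⟩, -⟩
  exact List.mem_filterMap.mpr ⟨cl, hcl, by simp [hh]⟩

theorem finite_setOf_validPath (hrf : RecursionFree arity HC) :
    {σ : List (Clause Con arity Tm × ℕ) | ∃ p, ValidPath HC p σ}.Finite := by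
  have hE : {e : Clause Con arity Tm × ℕ | e.1 ∈ HC ∧ e.2 < e.1.body.length}.Finite := by
    refine (HC.finite_toSet.biUnion fun cl _ =>
      (Set.finite_singleton cl).prod (Set.finite_Iio cl.body.length)).subset ?_
    rintro ⟨cl, j⟩ ⟨hcl, hj⟩
    exact Set.mem_biUnion hcl ⟨rfl, hj⟩
  refine (List.finite_setOf_length_le_of_forall_mem hE
    ((finite_setOf_dep (HC := HC)).toFinset.card + 1)).subset ?_
  rintro σ ⟨p, hσ⟩
  refine ⟨length_le_of_validPath hrf hσ fun q hq => ?_, fst_mem_and_snd_lt_of_validPath hσ⟩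
  obtain ⟨r, hqr, -⟩ := Relation.TransGen.head'_iff.mp hq
  exact (Set.Finite.mem_toFinset _).mpr ⟨r, hqr⟩

theorem finite_copy_rel_preimage (hrf : RecursionFree arity HC) (p : R) :
    (Copy.rel ⁻¹' {p} : Set (Copy HC)).Finite := by
  have hinj : Function.Injective fun x : Copy HC => (x.rel, x.path) :=
    fun x y h => Copy.ext (congrArg Prod.fst h) (congrArg Prod.snd h)
  refine (((Set.finite_singleton p).prod (finite_setOf_validPath hrf)).preimage
    hinj.injOn).subset ?_
  rintro x rfl
  exact ⟨rfl, x.rel, x.valid⟩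

theorem finite_setOf_validClausePath (hrf : RecursionFree arity HC) :
    {x : Clause Con arity Tm × List (Clause Con arity Tm × ℕ) |
      ValidClausePath HC x.1 x.2}.Finite := by
  refine (HC.finite_toSet.prod ((finite_setOf_validPath hrf).insert [])).subset ?_
  rintro ⟨cl, σ⟩ ⟨hcl, hnone, hsome⟩
  refine ⟨hcl, ?_⟩
  rcases hh : cl.head with _ | a
  · exact Or.inl (hnone hh)
  · exact Or.inr ⟨a.rel, hsome a hh⟩

noncomputable def dupHC (hrf : RecursionFree arity HC) :
    List (Clause Con (fun x : Copy HC => arity x.rel) Tm) :=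
  ((finite_setOf_validClausePath hrf).dependent_image fun _ hv => copyClause hv).toFinset.toList

theorem mem_dupHC {hrf : RecursionFree arity HC}
    {cl' : Clause Con (fun x : Copy HC => arity x.rel) Tm} :
    cl' ∈ dupHC hrf ↔ ∃ cl σ, ∃ hv : ValidClausePath HC cl σ, copyClause hv = cl' := by
  simp [dupHC]

theorem mapClause_mem_of_mem_dupHC {hrf : RecursionFree arity HC}
    {cl' : Clause Con (fun x : Copy HC => arity x.rel) Tm} (hmem : cl' ∈ dupHC hrf) :
    mapClause arity Copy.rel cl' ∈ HC := by
  obtain ⟨cl, σ, hv, rfl⟩ := mem_dupHC.mp hmem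
  rw [mapClause_copyClause hv]
  exact hv.1

theorem length_path_of_dep_dupHC {hrf : RecursionFree arity HC} {x y : Copy HC}
    (h : Dep (fun x : Copy HC => arity x.rel) (dupHC hrf) x y) :
    y.path.length = x.path.length + 1 := by
  obtain ⟨_, hmem, ⟨a', hh, rfl⟩, b', hb, rfl⟩ := h
  obtain ⟨cl, σ, hv, rfl⟩ := mem_dupHC.mp hmem
  obtain ⟨a, -, -, rfl⟩ := (copyClause_head_eq_some hv).mp hh
  obtain ⟨j, rfl⟩ := (mem_copyClause_body hv).mp hb
  rfl

theorem recursionFree_dupHC (hrf : RecursionFree arity HC) :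
    RecursionFree (fun x : Copy HC => arity x.rel) (dupHC hrf) :=
  Relation.not_transGen_self_of_lt (fun x => x.path.length) fun _ _ h => by
    rw [length_path_of_dep_dupHC h]
    exact Nat.lt_succ_self _

theorem bodyDisjoint_dupHC (hrf : RecursionFree arity HC) :
    BodyDisjoint (fun x : Copy HC => arity x.rel) (dupHC hrf) := by
  constructor
  · intro cl' hmem
    obtain ⟨cl, σ, hv, rfl⟩ := mem_dupHC.mp hmem
    refine List.pairwise_ofFn.mpr fun i j hij hrel => hij.ne (Fin.ext ?_)
    simpa [copyAtom] using congrArg Copy.path hrel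
  · intro cl₁ h₁ cl₂ h₂ b₁ hb₁ b₂ hb₂ hrel
    obtain ⟨cl, σ, hv, rfl⟩ := mem_dupHC.mp h₁
    obtain ⟨cl', σ', hv', rfl⟩ := mem_dupHC.mp h₂
    obtain ⟨i, rfl⟩ := (mem_copyClause_body hv).mp hb₁
    obtain ⟨j, rfl⟩ := (mem_copyClause_body hv').mp hb₂
    have hpath := congrArg Copy.path hrel
    simp only [copyAtom, List.cons.injEq, Prod.mk.injEq] at hpath
    obtain ⟨⟨rfl, -⟩, rfl⟩ := hpath
    rfl

theorem exists_head_of_forall_copyClause {cl : Clause Con arity Tm} (hcl : cl ∈ HC)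
    {Q : HAtom arity Tm → Prop} {Q' : HAtom (fun x : Copy HC => arity x.rel) Tm → Prop}
    (hQ : ∀ a, Q a ↔ ∀ σ (h : ValidPath HC a.rel σ), Q' ⟨⟨a.rel, σ, h⟩, a.args⟩)
    (hcopy : ∀ σ (hv : ValidClausePath HC cl σ),
      (∀ b' ∈ (copyClause hv).body, Q' b') → ∃ a', (copyClause hv).head = some a' ∧ Q' a')
    (hbody : ∀ b ∈ cl.body, Q b) : ∃ a, cl.head = some a ∧ Q a := by
  have hcopy_body :
      ∀ σ (hv : ValidClausePath HC cl σ), ∀ b' ∈ (copyClause hv).body, Q' b' := by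
    intro σ hv b' hb'
    obtain ⟨j, rfl⟩ := (mem_copyClause_body hv).mp hb'
    exact (hQ _).mp (hbody _ (List.getElem_mem j.2)) ((cl, j) :: σ) ⟨⟨j.2, rfl⟩, hv⟩
  rcases hh : cl.head with _ | a
  · have hv : ValidClausePath HC cl [] := ⟨hcl, fun _ => rfl, fun a ha => by simp [hh] at ha⟩
    obtain ⟨a', ha', -⟩ := hcopy [] hv (hcopy_body [] hv)
    simp [(copyClause_head_eq_none hv).mpr hh] at ha'
  · refine ⟨a, rfl, (hQ a).mpr fun σ h => ?_⟩
    have hv : ValidClausePath HC cl σ :=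
      ⟨hcl, fun h' => by simp [hh] at h', fun a' ha' => by cases hh.symm.trans ha'; exact h⟩
    obtain ⟨a', ha', hQa'⟩ := hcopy σ hv (hcopy_body σ hv)
    obtain ⟨a'', h'', hsome, rfl⟩ := (copyClause_head_eq_some hv).mp ha'
    cases hh.symm.trans hsome
    exact hQa'

theorem semSolvable_dupHC (hrf : RecursionFree arity HC) :
    SemSolvable U interp tval (fun x : Copy HC => arity x.rel) (dupHC hrf) ↔
      SemSolvable U interp tval arity HC := by
  refine ⟨fun h s => ?_, fun h s => ?_⟩
  · obtain ⟨ρ', hρ'⟩ := h s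
    refine ⟨fun p v => ∀ σ (h : ValidPath HC p σ), ρ' ⟨p, σ, h⟩ v, fun cl hcl => ?_⟩
    refine (clauseHoldsSem_iff U interp tval arity s _ cl).mpr fun α hc hbody => ?_
    exact exists_head_of_forall_copyClause hcl (fun _ => Iff.rfl) (fun σ hv =>
      (clauseHoldsSem_iff U interp tval _ s ρ' _).mp
        (hρ' _ (mem_dupHC.mpr ⟨cl, σ, hv, rfl⟩)) α hc) hbody
  · obtain ⟨ρ, hρ⟩ := h s
    refine ⟨fun x => ρ x.rel, fun cl' hmem => ?_⟩
    obtain ⟨cl, σ, hv, rfl⟩ := mem_dupHC.mp hmem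
    exact (clauseHoldsSem_mapClause U interp tval arity Copy.rel s ρ _).mp
      ((mapClause_copyClause hv).symm ▸ hρ cl hv.1)

theorem clauseHoldsSyn_of_dupHC {hrf : RecursionFree arity HC} {sol' : Copy HC → Con}
    (hsolve : ∀ cl' ∈ dupHC hrf, ClauseHoldsSyn U interp tval (fun x : Copy HC => arity x.rel)
      (fun x : Copy HC => xvar x.rel) sol' cl')
    {sol : R → Con}
    (hsol : ∀ (p : R) (s : S) (α : V → U s),
      interp (sol p) s α ↔ ∀ x : Copy HC, x.rel = p → interp (sol' x) s α) :
    ∀ cl ∈ HC, ClauseHoldsSyn U interp tval arity xvar sol cl := by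
  intro cl hcl
  refine (clauseHoldsSyn_iff U interp tval arity xvar sol cl).mpr fun s α hc hbody => ?_
  exact exists_head_of_forall_copyClause hcl
    (fun a => (hsol a.rel s _).trans Copy.forall_rel_eq)
    (fun σ hv => (clauseHoldsSyn_iff U interp tval _ _ sol' _).mp
      (hsolve _ (mem_dupHC.mpr ⟨cl, σ, hv, rfl⟩)) s α hc) hbody

end Duplication

theorem stmt12 (HC : List (Clause Con arity Tm))
    (hrf : RecursionFree arity HC) :
    ∃ (R' : Type) (π : R' → R) (HC' : List (Clause Con (fun p' => arity (π p')) Tm)),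
      -- π : finitely many, at least one, copies of each relation symbol
      (∀ p : R, (π ⁻¹' {p}).Finite ∧ (π ⁻¹' {p}).Nonempty) ∧
      -- every clause of HC' is a copy of a clause of HC
      (∀ cl' ∈ HC', mapClause arity π cl' ∈ HC) ∧
      RecursionFree (fun p' => arity (π p')) HC' ∧
      BodyDisjoint (fun p' => arity (π p')) HC' ∧
      -- the two systems are equivalent (w.r.t. semantic solvability)
      (SemSolvable U interp tval (fun p' => arity (π p')) HC' ↔
        SemSolvable U interp tval arity HC) ∧
      -- solution transfer: conjunctions of the copies solve the original system
      (∀ sol' : R' → Con,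
        GoodSol U interp (fun p' => arity (π p')) (fun p' => xvar (π p')) sol' →
        (∀ cl' ∈ HC',
          ClauseHoldsSyn U interp tval (fun p' => arity (π p')) (fun p' => xvar (π p')) sol' cl') →
        ∀ sol : R → Con,
          (∀ (p : R) (s : S) (α : V → U s),
            interp (sol p) s α ↔ ∀ p' : R', π p' = p → interp (sol' p') s α) →
          (GoodSol U interp arity xvar sol ∧
            ∀ cl ∈ HC, ClauseHoldsSyn U interp tval arity xvar sol cl)) := by
  exact ⟨Copy HC, Copy.rel, dupHC hrf,
    fun p => ⟨finite_copy_rel_preimage hrf p, ⟨p, [], trivial⟩, rfl⟩,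
    fun _ => mapClause_mem_of_mem_dupHC, recursionFree_dupHC hrf, bodyDisjoint_dupHC hrf,
    semSolvable_dupHC U interp tval hrf, fun _ hgood hsolve _ hsol =>
      ⟨goodSol_of_forall_fiber U interp arity xvar hgood hsol,
        clauseHoldsSyn_of_dupHC U interp tval xvar hsolve hsol⟩⟩

end Stmt12
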